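/- Let W(y|x) = e^{−(λ+x)}(λ+x)^y / y! be the Poisson channel law, and suppose (u_i)_{i∈[L]}, (D_i)_{i∈[L]} is a deterministic identification code with max type-I error ≤ λ_1 and max type-II error ≤ λ_2, where λ_1 + λ_2 < 1 − 4κ for some κ > 0. Then for sufficiently large n, for every pair i_1 ≠ i_2 there exists t ∈ [n] with |1 − (λ+u_{i_2,t})/(λ+u_{i_1,t})| ≥ P_max/n^{1+b}, where b > 0 is fixed and all codewords satisfy 0 < u_{i,t} ≤ P_max. -/

import Mathlib

open Real

namespace ConverseAux

/-- Poisson pmf with mean `x`. -/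
noncomputable def pois (x : ℝ) (k : ℕ) : ℝ := Real.exp (-x) * x ^ k / (Nat.factorial k)

lemma exp_tsum (x : ℝ) : ∑' k : ℕ, x ^ k / (Nat.factorial k : ℝ) = Real.exp x := by
  rw [Real.exp_eq_exp_ℝ, NormedSpace.exp_eq_tsum_div]

lemma pois_nonneg {x : ℝ} (hx : 0 ≤ x) (k : ℕ) : 0 ≤ pois x k := by
  unfold pois; positivity

lemma pois_summable (x : ℝ) : Summable (pois x) := by
  have h := (Real.summable_pow_div_factorial x).mul_left (Real.exp (-x))
  refine h.congr fun k => ?_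
  simp [pois, mul_div_assoc]

lemma pois_tsum (x : ℝ) : ∑' k, pois x k = 1 := by
  have h : ∑' k, pois x k = Real.exp (-x) * ∑' k : ℕ, x ^ k / (Nat.factorial k : ℝ) := by
    rw [← tsum_mul_left]
    exact tsum_congr fun k => mul_div_assoc _ _ _
  rw [h, exp_tsum, ← Real.exp_add]
  simp

lemma pois_hasDerivAt (k : ℕ) (x : ℝ) :
    HasDerivAt (fun x => pois x k)
      ((Real.exp (-x) * ((k : ℝ) * x ^ (k - 1)) - Real.exp (-x) * x ^ k) /
        (Nat.factorial k : ℝ)) x := by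
  have h1 : HasDerivAt (fun x : ℝ => Real.exp (-x)) (Real.exp (-x) * (-1)) x :=
    (hasDerivAt_neg x).exp
  have h2 : HasDerivAt (fun x : ℝ => x ^ k) ((k : ℝ) * x ^ (k - 1)) x := hasDerivAt_pow k x
  have h := (h1.mul h2).div_const ((Nat.factorial k : ℝ))
  simp only [pois]
  refine h.congr_deriv ?_
  ring

lemma pois_diff_le {lam M : ℝ} (h0 : 0 < lam) (k : ℕ)
    {a c : ℝ} (ha : a ∈ Set.Icc lam M) (hc : c ∈ Set.Icc lam M) :
    |pois a k - pois c k| ≤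
      (Real.exp (-lam) * ((k : ℝ) * M ^ (k - 1) + M ^ k) / (Nat.factorial k : ℝ)) * |a - c| := by
  have hconv : Convex ℝ (Set.Icc lam M) := convex_Icc _ _
  have hder : ∀ x ∈ Set.Icc lam M, HasDerivWithinAt (fun x => pois x k)
      ((Real.exp (-x) * ((k : ℝ) * x ^ (k - 1)) - Real.exp (-x) * x ^ k) / (Nat.factorial k : ℝ))
      (Set.Icc lam M) x := fun x _ => (pois_hasDerivAt k x).hasDerivWithinAt
  have hbound : ∀ x ∈ Set.Icc lam M,
      ‖(Real.exp (-x) * ((k : ℝ) * x ^ (k - 1)) - Real.exp (-x) * x ^ k) / (Nat.factorial k : ℝ)‖ ≤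
        Real.exp (-lam) * ((k : ℝ) * M ^ (k - 1) + M ^ k) / (Nat.factorial k : ℝ) := by
    intro x hx
    obtain ⟨hx1, hx2⟩ := hx
    have hxpos : (0:ℝ) ≤ x := le_trans h0.le hx1
    have hMnn : (0:ℝ) ≤ M := le_trans hxpos hx2
    have hexp : Real.exp (-x) ≤ Real.exp (-lam) := Real.exp_le_exp.2 (by linarith)
    have hpow1 : x ^ (k - 1) ≤ M ^ (k - 1) := pow_le_pow_left₀ hxpos hx2 _
    have hpow2 : x ^ k ≤ M ^ k := pow_le_pow_left₀ hxpos hx2 _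
    have hA : (0:ℝ) ≤ Real.exp (-x) * ((k : ℝ) * x ^ (k - 1)) := by positivity
    have hB : (0:ℝ) ≤ Real.exp (-x) * x ^ k := by positivity
    have hA' : (0:ℝ) ≤ Real.exp (-lam) * ((k : ℝ) * M ^ (k - 1)) := by positivity
    have hB' : (0:ℝ) ≤ Real.exp (-lam) * M ^ k := by positivity
    have h1 : Real.exp (-x) * ((k : ℝ) * x ^ (k - 1)) ≤
        Real.exp (-lam) * ((k : ℝ) * M ^ (k - 1)) :=
      mul_le_mul hexp (mul_le_mul_of_nonneg_left hpow1 (Nat.cast_nonneg k))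
        (by positivity) (Real.exp_pos _).le
    have h2 : Real.exp (-x) * x ^ k ≤ Real.exp (-lam) * M ^ k :=
      mul_le_mul hexp hpow2 (by positivity) (Real.exp_pos _).le
    have hnum : |Real.exp (-x) * ((k : ℝ) * x ^ (k - 1)) - Real.exp (-x) * x ^ k| ≤
        Real.exp (-lam) * ((k : ℝ) * M ^ (k - 1) + M ^ k) := by
      have heq : Real.exp (-lam) * ((k : ℝ) * M ^ (k - 1) + M ^ k) =
          Real.exp (-lam) * ((k : ℝ) * M ^ (k - 1)) + Real.exp (-lam) * M ^ k := by ring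
      rw [heq, abs_le]
      constructor <;> linarith
    have hfact : (0:ℝ) < (Nat.factorial k : ℝ) := by positivity
    rw [Real.norm_eq_abs, abs_div, abs_of_nonneg hfact.le]
    exact (div_le_div_iff_of_pos_right hfact).mpr hnum
  have h := hconv.norm_image_sub_le_of_norm_hasDerivWithin_le hder hbound hc ha
  simpa [Real.norm_eq_abs] using h

lemma mSummable {M : ℝ} :
    Summable (fun k : ℕ => (k : ℝ) * M ^ (k - 1) / (Nat.factorial k : ℝ)) := by
  rw [← summable_nat_add_iff 1]
  refine (Real.summable_pow_div_factorial M).congr fun k => ?_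
  rw [Nat.add_sub_cancel, Nat.factorial_succ]
  push_cast
  rw [eq_comm, div_eq_div_iff (by positivity) (by positivity)]
  ring

lemma mTsum {M : ℝ} :
    ∑' k : ℕ, (k : ℝ) * M ^ (k - 1) / (Nat.factorial k : ℝ) = Real.exp M := by
  rw [Summable.tsum_eq_zero_add mSummable]
  have h : ∀ k : ℕ, ((k + 1 : ℕ) : ℝ) * M ^ ((k + 1) - 1) / (Nat.factorial (k + 1) : ℝ)
      = M ^ k / (Nat.factorial k : ℝ) := by
    intro k
    rw [Nat.add_sub_cancel, Nat.factorial_succ]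
    push_cast
    rw [div_eq_div_iff (by positivity) (by positivity)]
    ring
  rw [tsum_congr h, exp_tsum]
  simp

lemma pois_dist {lam M : ℝ} (h0 : 0 < lam) {a c : ℝ}
    (ha : a ∈ Set.Icc lam M) (hc : c ∈ Set.Icc lam M) :
    Summable (fun k => |pois a k - pois c k|) ∧
    ∑' k, |pois a k - pois c k| ≤ 2 * Real.exp M * |a - c| := by
  have hmEq : (fun k : ℕ =>
        Real.exp (-lam) * ((k : ℝ) * M ^ (k - 1) + M ^ k) / (Nat.factorial k : ℝ))
      = fun k : ℕ => Real.exp (-lam) * ((k : ℝ) * M ^ (k - 1) / (Nat.factorial k : ℝ))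
        + Real.exp (-lam) * (M ^ k / (Nat.factorial k : ℝ)) := by
    funext k; ring
  have hms : Summable (fun k : ℕ =>
      Real.exp (-lam) * ((k : ℝ) * M ^ (k - 1) + M ^ k) / (Nat.factorial k : ℝ)) := by
    rw [hmEq]
    exact (mSummable.mul_left _).add ((Real.summable_pow_div_factorial M).mul_left _)
  have hmt : ∑' k : ℕ, Real.exp (-lam) * ((k : ℝ) * M ^ (k - 1) + M ^ k) / (Nat.factorial k : ℝ)
      ≤ 2 * Real.exp M := by
    rw [hmEq, Summable.tsum_add (mSummable.mul_left _) ((Real.summable_pow_div_factorial M).mul_left _),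
      tsum_mul_left, tsum_mul_left, mTsum, exp_tsum]
    have h1 : Real.exp (-lam) ≤ 1 := Real.exp_le_one_iff.2 (by linarith)
    nlinarith [Real.exp_pos M]
  have hle : ∀ k, |pois a k - pois c k| ≤
      (Real.exp (-lam) * ((k : ℝ) * M ^ (k - 1) + M ^ k) / (Nat.factorial k : ℝ)) * |a - c| :=
    fun k => pois_diff_le h0 k ha hc
  have hs : Summable (fun k => |pois a k - pois c k|) :=
    Summable.of_nonneg_of_le (fun k => abs_nonneg _) hle (hms.mul_right _)
  refine ⟨hs, ?_⟩
  calc ∑' k, |pois a k - pois c k|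
      ≤ ∑' k : ℕ, (Real.exp (-lam) * ((k : ℝ) * M ^ (k - 1) + M ^ k) /
          (Nat.factorial k : ℝ)) * |a - c| := Summable.tsum_le_tsum hle hs (hms.mul_right _)
    _ = (∑' k : ℕ, Real.exp (-lam) * ((k : ℝ) * M ^ (k - 1) + M ^ k) /
          (Nat.factorial k : ℝ)) * |a - c| := tsum_mul_right
    _ ≤ 2 * Real.exp M * |a - c| := mul_le_mul_of_nonneg_right hmt (abs_nonneg _)

lemma tsum_cons {n : ℕ} (φ : ℕ → ℝ) (ψ : (Fin n → ℕ) → ℝ)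
    (hφ0 : ∀ k, 0 ≤ φ k) (hψ0 : ∀ z, 0 ≤ ψ z) (hφ : Summable φ) (hψ : Summable ψ) :
    Summable (fun y : Fin (n + 1) → ℕ => φ (y 0) * ψ (fun t => y t.succ)) ∧
    ∑' y : Fin (n + 1) → ℕ, φ (y 0) * ψ (fun t => y t.succ) = (∑' k, φ k) * (∑' z, ψ z) := by
  let e : ℕ × (Fin n → ℕ) ≃ (Fin (n + 1) → ℕ) := Fin.consEquiv (fun _ => ℕ)
  have key : ∀ p : ℕ × (Fin n → ℕ),
      φ ((e p) 0) * ψ (fun t => (e p) t.succ) = φ p.1 * ψ p.2 := by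
    rintro ⟨k, z⟩
    simp [e, Fin.consEquiv]
  have hF : Summable (fun p : ℕ × (Fin n → ℕ) => φ p.1 * ψ p.2) :=
    hφ.mul_of_nonneg hψ hφ0 hψ0
  have hsum : Summable (fun y : Fin (n + 1) → ℕ => φ (y 0) * ψ (fun t => y t.succ)) := by
    rw [← Equiv.summable_iff e]
    exact hF.congr fun p => (key p).symm
  refine ⟨hsum, ?_⟩
  have h1 : ∑' p : ℕ × (Fin n → ℕ), φ p.1 * ψ p.2 = (∑' k, φ k) * ∑' z, ψ z := by
    rw [Summable.tsum_prod hF]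
    simp_rw [tsum_mul_left]
    rw [tsum_mul_right]
  calc ∑' y : Fin (n + 1) → ℕ, φ (y 0) * ψ (fun t => y t.succ)
      = ∑' p : ℕ × (Fin n → ℕ), φ ((e p) 0) * ψ (fun t => (e p) t.succ) :=
        (Equiv.tsum_eq e _).symm
    _ = ∑' p : ℕ × (Fin n → ℕ), φ p.1 * ψ p.2 := tsum_congr key
    _ = (∑' k, φ k) * ∑' z, ψ z := h1

set_option maxHeartbeats 1000000 in
lemma tsum_pi_prod : ∀ {n : ℕ} (g : Fin n → ℕ → ℝ), (∀ t k, 0 ≤ g t k) →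
    (∀ t, Summable (g t)) →
    Summable (fun y : Fin n → ℕ => ∏ t, g t (y t)) ∧
    ∑' y : Fin n → ℕ, ∏ t, g t (y t) = ∏ t, ∑' k, g t k := by
  intro n
  induction n with
  | zero =>
    intro g _ _
    have h : (fun y : Fin 0 → ℕ => ∏ t, g t (y t)) = fun _ => 1 := by
      funext y; simp
    constructor
    · rw [h]
      exact .of_finite
    · rw [h, tsum_fintype]; simp
  | succ n ih =>
    intro g hg0 hgs
    obtain ⟨ihs, iht⟩ := ih (fun t => g t.succ) (fun t k => hg0 _ _) (fun t => hgs _)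
    have hc := tsum_cons (g 0) (fun z => ∏ t, g t.succ (z t)) (hg0 0)
      (fun z => Finset.prod_nonneg fun t _ => hg0 _ _) (hgs 0) (by exact ihs)
    have hkey : (fun y : Fin (n + 1) → ℕ => ∏ t, g t (y t))
        = fun y => g 0 (y 0) * ∏ t : Fin n, g t.succ (y t.succ) := by
      funext y; exact Fin.prod_univ_succ _
    constructor
    · rw [hkey]; exact hc.1
    · rw [hkey]
      calc ∑' y : Fin (n + 1) → ℕ, g 0 (y 0) * ∏ t : Fin n, g t.succ (y t.succ)
          = (∑' k, g 0 k) * ∑' z : Fin n → ℕ, ∏ t, g t.succ (z t) := hc.2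
        _ = ∏ t : Fin (n + 1), ∑' k, g t k := by
            rw [Fin.prod_univ_succ, iht]

set_option maxHeartbeats 1000000 in
lemma tsum_pi_prod_sub : ∀ {n : ℕ} (g h : Fin n → ℕ → ℝ) (c : Fin n → ℝ),
    (∀ t k, 0 ≤ g t k) → (∀ t k, 0 ≤ h t k) → (∀ t, Summable (g t)) → (∀ t, Summable (h t)) →
    (∀ t, ∑' k, g t k ≤ 1) → (∀ t, ∑' k, h t k ≤ 1) →
    (∀ t, Summable (fun k => |g t k - h t k|)) →
    (∀ t, ∑' k, |g t k - h t k| ≤ c t) →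
    ∑' y : Fin n → ℕ, |∏ t, g t (y t) - ∏ t, h t (y t)| ≤ ∑ t, c t := by
  intro n
  induction n with
  | zero =>
    intro g h c _ _ _ _ _ _ _ _
    have hk : (fun y : Fin 0 → ℕ => |∏ t, g t (y t) - ∏ t, h t (y t)|) = fun _ => 0 := by
      funext y; simp
    rw [hk]; simp
  | succ n ih =>
    intro g h c hg0 hh0 hgs hhs hg1 hh1 hds hdc
    obtain ⟨hPs, hPt⟩ := tsum_pi_prod (fun t => g t.succ) (fun t k => hg0 _ _) (fun t => hgs _)
    obtain ⟨hQs, hQt⟩ := tsum_pi_prod (fun t => h t.succ) (fun t k => hh0 _ _) (fun t => hhs _)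
    obtain ⟨hps, _⟩ := tsum_pi_prod g hg0 hgs
    obtain ⟨hqs, _⟩ := tsum_pi_prod h hh0 hhs
    have hPnn : ∀ z : Fin n → ℕ, (0:ℝ) ≤ ∏ t, g t.succ (z t) :=
      fun z => Finset.prod_nonneg fun t _ => hg0 _ _
    have hQnn : ∀ z : Fin n → ℕ, (0:ℝ) ≤ ∏ t, h t.succ (z t) :=
      fun z => Finset.prod_nonneg fun t _ => hh0 _ _
    have hPQs : Summable (fun z : Fin n → ℕ => |∏ t, g t.succ (z t) - ∏ t, h t.succ (z t)|) :=
      Summable.of_nonneg_of_le (fun z => abs_nonneg _)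
        (fun z => abs_le.mpr ⟨by linarith [hPnn z, hQnn z], by linarith [hPnn z, hQnn z]⟩)
        (hPs.add hQs)
    have hPQt : ∑' z : Fin n → ℕ, |∏ t, g t.succ (z t) - ∏ t, h t.succ (z t)|
        ≤ ∑ t : Fin n, c t.succ :=
      ih (fun t => g t.succ) (fun t => h t.succ) (fun t => c t.succ)
        (fun t k => hg0 _ _) (fun t k => hh0 _ _) (fun t => hgs _) (fun t => hhs _)
        (fun t => hg1 _) (fun t => hh1 _) (fun t => hds _) (fun t => hdc _)
    have hQ1 : ∑' z : Fin n → ℕ, ∏ t, h t.succ (z t) ≤ 1 := by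
      rw [hQt]
      exact Finset.prod_le_one (fun t _ => tsum_nonneg fun k => hh0 _ _) (fun t _ => hh1 _)
    have hc1 := tsum_cons (g 0) (fun z => |∏ t, g t.succ (z t) - ∏ t, h t.succ (z t)|)
      (hg0 0) (fun z => abs_nonneg _) (hgs 0) (by exact hPQs)
    have hc2 := tsum_cons (fun k => |g 0 k - h 0 k|) (fun z => ∏ t, h t.succ (z t))
      (fun k => abs_nonneg _) hQnn (hds 0) (by exact hQs)
    have hpnn : ∀ y : Fin (n+1) → ℕ, (0:ℝ) ≤ ∏ t, g t (y t) :=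
      fun y => Finset.prod_nonneg fun t _ => hg0 _ _
    have hqnn : ∀ y : Fin (n+1) → ℕ, (0:ℝ) ≤ ∏ t, h t (y t) :=
      fun y => Finset.prod_nonneg fun t _ => hh0 _ _
    have habs : Summable (fun y : Fin (n+1) → ℕ => |∏ t, g t (y t) - ∏ t, h t (y t)|) :=
      Summable.of_nonneg_of_le (fun y => abs_nonneg _)
        (fun y => abs_le.mpr ⟨by linarith [hpnn y, hqnn y], by linarith [hpnn y, hqnn y]⟩)
        (hps.add hqs)
    have hpt : ∀ y : Fin (n + 1) → ℕ,
        |∏ t, g t (y t) - ∏ t, h t (y t)| ≤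
          g 0 (y 0) * |(∏ t : Fin n, g t.succ (y t.succ)) - ∏ t : Fin n, h t.succ (y t.succ)|
            + |g 0 (y 0) - h 0 (y 0)| * ∏ t : Fin n, h t.succ (y t.succ) := by
      intro y
      rw [Fin.prod_univ_succ (fun t => g t (y t)), Fin.prod_univ_succ (fun t => h t (y t))]
      set pa := ∏ t : Fin n, g t.succ (y t.succ) with hpa
      set qa := ∏ t : Fin n, h t.succ (y t.succ) with hqa
      calc |g 0 (y 0) * pa - h 0 (y 0) * qa|
          = |g 0 (y 0) * (pa - qa) + (g 0 (y 0) - h 0 (y 0)) * qa| := by congr 1; ring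
        _ ≤ |g 0 (y 0) * (pa - qa)| + |(g 0 (y 0) - h 0 (y 0)) * qa| := abs_add_le _ _
        _ = g 0 (y 0) * |pa - qa| + |g 0 (y 0) - h 0 (y 0)| * qa := by
            rw [abs_mul, abs_mul, abs_of_nonneg (hg0 0 (y 0)),
              abs_of_nonneg (Finset.prod_nonneg fun t _ => hh0 _ _ : (0:ℝ) ≤ qa)]
    calc ∑' y : Fin (n + 1) → ℕ, |∏ t, g t (y t) - ∏ t, h t (y t)|
        ≤ ∑' y : Fin (n + 1) → ℕ,
            (g 0 (y 0) * |(∏ t : Fin n, g t.succ (y t.succ)) - ∏ t : Fin n, h t.succ (y t.succ)|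
              + |g 0 (y 0) - h 0 (y 0)| * ∏ t : Fin n, h t.succ (y t.succ)) :=
          Summable.tsum_le_tsum hpt habs (hc1.1.add hc2.1)
      _ = (∑' y : Fin (n + 1) → ℕ,
            g 0 (y 0) * |(∏ t : Fin n, g t.succ (y t.succ)) - ∏ t : Fin n, h t.succ (y t.succ)|)
          + ∑' y : Fin (n + 1) → ℕ,
            |g 0 (y 0) - h 0 (y 0)| * ∏ t : Fin n, h t.succ (y t.succ) :=
          Summable.tsum_add hc1.1 hc2.1
      _ = (∑' k, g 0 k) * (∑' z : Fin n → ℕ, |∏ t, g t.succ (z t) - ∏ t, h t.succ (z t)|)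
          + (∑' k, |g 0 k - h 0 k|) * ∑' z : Fin n → ℕ, ∏ t, h t.succ (z t) := by
          rw [hc1.2, hc2.2]
      _ ≤ 1 * (∑ t : Fin n, c t.succ) + c 0 * 1 := by
          have hg0t : ∑' k, g 0 k ≤ 1 := hg1 0
          have hg0nn : 0 ≤ ∑' k, g 0 k := tsum_nonneg fun k => hg0 0 k
          have hPQnn : 0 ≤ ∑' z : Fin n → ℕ, |∏ t, g t.succ (z t) - ∏ t, h t.succ (z t)| :=
            tsum_nonneg fun z => abs_nonneg _
          have hd0nn : 0 ≤ ∑' k, |g 0 k - h 0 k| := tsum_nonneg fun k => abs_nonneg _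
          have hQnn' : 0 ≤ ∑' z : Fin n → ℕ, ∏ t, h t.succ (z t) := tsum_nonneg hQnn
          exact add_le_add (mul_le_mul hg0t hPQt hPQnn zero_le_one)
            (mul_le_mul (hdc 0) hQ1 hQnn' (le_trans hd0nn (hdc 0)))
      _ = ∑ t : Fin (n + 1), c t := by rw [Fin.sum_univ_succ]; ring

end ConverseAux

open ConverseAux

set_option maxHeartbeats 1000000 in
/-- Converse lemma: for a DI code for the Poisson channel with peak power `P_max`,
maximal type-I error `≤ λ₁` and maximal type-II error `≤ λ₂`, where
`λ₁ + λ₂ < 1 − 4κ`, `κ > 0`, and for sufficiently large blocklength `n`, every pair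
of distinct codewords has a coordinate `t` with
`|1 − (λ+u_{i₂,t})/(λ+u_{i₁,t})| ≥ P_max/n^{1+b}`. -/
theorem converse_ratio_lemma (lam Pmax b κ lam1 lam2 : ℝ)
    (hlam : 0 < lam) (hP : 0 < Pmax) (hb : 0 < b) (hκ : 0 < κ)
    (herr : lam1 + lam2 < 1 - 4 * κ) :
    ∃ N : ℕ, ∀ n : ℕ, N ≤ n →
      ∀ (L : ℕ) (u : Fin L → Fin n → ℝ) (D : Fin L → Set (Fin n → ℕ)),
        (∀ i t, 0 < u i t ∧ u i t ≤ Pmax) →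
        (∀ i : Fin L,
          1 - ∑' y : (D i),
              (∏ t, Real.exp (-(lam + u i t)) * (lam + u i t) ^ ((y : Fin n → ℕ) t) /
                (Nat.factorial ((y : Fin n → ℕ) t)))
            ≤ lam1) →
        (∀ i j : Fin L, i ≠ j →
          (∑' y : (D j),
              (∏ t, Real.exp (-(lam + u i t)) * (lam + u i t) ^ ((y : Fin n → ℕ) t) /
                (Nat.factorial ((y : Fin n → ℕ) t))))
            ≤ lam2) →
        ∀ i₁ i₂ : Fin L, i₁ ≠ i₂ →
          ∃ t : Fin n,
            Pmax / (n : ℝ) ^ ((1 : ℝ) + b) ≤ |1 - (lam + u i₂ t) / (lam + u i₁ t)| := by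
  classical
  have hMpos : (0:ℝ) < lam + Pmax := by linarith
  set Kc : ℝ := 2 * Real.exp (lam + Pmax) * ((lam + Pmax) * Pmax) with hKc
  have hKpos : 0 < Kc := by positivity
  obtain ⟨N, hN⟩ := exists_nat_gt (max 1 ((Kc / (4 * κ)) ^ (1 / b : ℝ)))
  refine ⟨N, fun n hn L u D hu herr1 herr2 i₁ i₂ hne => ?_⟩
  by_contra hcon
  push_neg at hcon
  have hn1 : (1:ℝ) < (n:ℝ) :=
    lt_of_lt_of_le (lt_of_le_of_lt (le_max_left _ _) hN) (Nat.cast_le.2 hn)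
  have hnpos : (0:ℝ) < (n:ℝ) := by linarith
  have hnbpos : (0:ℝ) < (n:ℝ) ^ (b:ℝ) := Real.rpow_pos_of_pos hnpos _
  have hn1bpos : (0:ℝ) < (n:ℝ) ^ ((1:ℝ) + b) := Real.rpow_pos_of_pos hnpos _
  have hkey : Kc / (n:ℝ) ^ (b:ℝ) < 4 * κ := by
    have h4 : (0:ℝ) < 4 * κ := by linarith
    have hlt : (Kc / (4 * κ)) ^ (1 / b : ℝ) < (n:ℝ) :=
      lt_of_lt_of_le (lt_of_le_of_lt (le_max_right _ _) hN) (Nat.cast_le.2 hn)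
    have h0 : (0:ℝ) ≤ (Kc / (4 * κ)) ^ (1 / b : ℝ) := Real.rpow_nonneg (by positivity) _
    have hr := Real.rpow_lt_rpow h0 hlt hb
    rw [← Real.rpow_mul (by positivity), one_div, inv_mul_cancel₀ (ne_of_gt hb),
      Real.rpow_one] at hr
    rw [div_lt_iff₀ hnbpos]
    have := (div_lt_iff₀ h4).1 hr
    nlinarith
  -- abbreviations
  have hu1pos : ∀ t, (0:ℝ) < lam + u i₁ t := fun t => by have := (hu i₁ t).1; linarith
  have hu2pos : ∀ t, (0:ℝ) < lam + u i₂ t := fun t => by have := (hu i₂ t).1; linarith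
  have haI : ∀ t, (lam + u i₁ t) ∈ Set.Icc lam (lam + Pmax) := fun t =>
    ⟨by have := (hu i₁ t).1; linarith, by have := (hu i₁ t).2; linarith⟩
  have hcI : ∀ t, (lam + u i₂ t) ∈ Set.Icc lam (lam + Pmax) := fun t =>
    ⟨by have := (hu i₂ t).1; linarith, by have := (hu i₂ t).2; linarith⟩
  have hεnn : (0:ℝ) ≤ Pmax / (n:ℝ) ^ ((1:ℝ) + b) := by positivity
  have hdiff : ∀ t, |(lam + u i₁ t) - (lam + u i₂ t)| ≤
      (lam + Pmax) * (Pmax / (n:ℝ) ^ ((1:ℝ) + b)) := by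
    intro t
    have hane : (lam + u i₁ t) ≠ 0 := ne_of_gt (hu1pos t)
    have heq : 1 - (lam + u i₂ t) / (lam + u i₁ t)
        = ((lam + u i₁ t) - (lam + u i₂ t)) / (lam + u i₁ t) := by
      field_simp
    have habs : |(lam + u i₁ t) - (lam + u i₂ t)|
        = |1 - (lam + u i₂ t) / (lam + u i₁ t)| * |lam + u i₁ t| := by
      rw [heq, abs_div, div_mul_cancel₀ _ (abs_ne_zero.mpr hane)]
    rw [habs]
    have h1 : |1 - (lam + u i₂ t) / (lam + u i₁ t)| ≤ Pmax / (n:ℝ) ^ ((1:ℝ) + b) :=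
      (hcon t).le
    have h2 : |lam + u i₁ t| ≤ lam + Pmax := by
      rw [abs_of_pos (hu1pos t)]; exact (haI t).2
    calc |1 - (lam + u i₂ t) / (lam + u i₁ t)| * |lam + u i₁ t|
        ≤ (Pmax / (n:ℝ) ^ ((1:ℝ) + b)) * (lam + Pmax) :=
          mul_le_mul h1 h2 (abs_nonneg _) hεnn
      _ = (lam + Pmax) * (Pmax / (n:ℝ) ^ ((1:ℝ) + b)) := by ring
  have hdist : ∀ t, ∑' k, |pois (lam + u i₁ t) k - pois (lam + u i₂ t) k| ≤
      2 * Real.exp (lam + Pmax) * ((lam + Pmax) * (Pmax / (n:ℝ) ^ ((1:ℝ) + b))) := fun t =>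
    le_trans (pois_dist hlam (haI t) (hcI t)).2
      (mul_le_mul_of_nonneg_left (hdiff t) (by positivity))
  have hdistS : ∀ t, Summable (fun k => |pois (lam + u i₁ t) k - pois (lam + u i₂ t) k|) :=
    fun t => (pois_dist hlam (haI t) (hcI t)).1
  -- product measures
  obtain ⟨hps, hptot⟩ := tsum_pi_prod (fun t => pois (lam + u i₁ t))
    (fun t k => pois_nonneg (hu1pos t).le k) (fun t => pois_summable _)
  obtain ⟨hqs, hqtot⟩ := tsum_pi_prod (fun t => pois (lam + u i₂ t))
    (fun t k => pois_nonneg (hu2pos t).le k) (fun t => pois_summable _)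
  have hpnn : ∀ y : Fin n → ℕ, (0:ℝ) ≤ ∏ t, pois (lam + u i₁ t) (y t) :=
    fun y => Finset.prod_nonneg fun t _ => pois_nonneg (hu1pos t).le _
  have hqnn : ∀ y : Fin n → ℕ, (0:ℝ) ≤ ∏ t, pois (lam + u i₂ t) (y t) :=
    fun y => Finset.prod_nonneg fun t _ => pois_nonneg (hu2pos t).le _
  have habs : Summable (fun y : Fin n → ℕ =>
      |∏ t, pois (lam + u i₁ t) (y t) - ∏ t, pois (lam + u i₂ t) (y t)|) :=
    Summable.of_nonneg_of_le (fun y => abs_nonneg _)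
      (fun y => abs_le.mpr ⟨by linarith [hpnn y, hqnn y], by linarith [hpnn y, hqnn y]⟩)
      (hps.add hqs)
  have hbig : ∑' y : Fin n → ℕ,
      |∏ t, pois (lam + u i₁ t) (y t) - ∏ t, pois (lam + u i₂ t) (y t)| ≤
      ∑ _t : Fin n, 2 * Real.exp (lam + Pmax) *
        ((lam + Pmax) * (Pmax / (n:ℝ) ^ ((1:ℝ) + b))) :=
    tsum_pi_prod_sub (fun t => pois (lam + u i₁ t)) (fun t => pois (lam + u i₂ t)) _
      (fun t k => pois_nonneg (hu1pos t).le k) (fun t k => pois_nonneg (hu2pos t).le k)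
      (fun t => pois_summable _) (fun t => pois_summable _)
      (fun t => (pois_tsum _).le) (fun t => (pois_tsum _).le)
      hdistS hdist
  have hsumconst : ∑ _t : Fin n, 2 * Real.exp (lam + Pmax) *
      ((lam + Pmax) * (Pmax / (n:ℝ) ^ ((1:ℝ) + b))) = Kc / (n:ℝ) ^ (b:ℝ) := by
    rw [Finset.sum_const, Finset.card_univ, Fintype.card_fin, nsmul_eq_mul]
    have hsplit : (n:ℝ) ^ ((1:ℝ) + b) = (n:ℝ) * (n:ℝ) ^ (b:ℝ) := by
      rw [Real.rpow_add hnpos, Real.rpow_one]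
    rw [hKc, hsplit]
    field_simp
  -- error hypotheses
  have hβ1 : 1 - ∑' y : (D i₁), ∏ t, pois (lam + u i₁ t) ((y : Fin n → ℕ) t) ≤ lam1 :=
    herr1 i₁
  have hβ2 : ∑' y : (D i₁), ∏ t, pois (lam + u i₂ t) ((y : Fin n → ℕ) t) ≤ lam2 :=
    herr2 i₂ i₁ (Ne.symm hne)
  have hsub1 : Summable (fun y : (D i₁) => ∏ t, pois (lam + u i₁ t) ((y : Fin n → ℕ) t)) :=
    hps.subtype _
  have hsub2 : Summable (fun y : (D i₁) => ∏ t, pois (lam + u i₂ t) ((y : Fin n → ℕ) t)) :=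
    hqs.subtype _
  have hcontr : (4:ℝ) * κ < 4 * κ := by
    calc (4:ℝ) * κ < (1 - lam1) - lam2 := by linarith
      _ ≤ (∑' y : (D i₁), ∏ t, pois (lam + u i₁ t) ((y : Fin n → ℕ) t))
          - ∑' y : (D i₁), ∏ t, pois (lam + u i₂ t) ((y : Fin n → ℕ) t) :=
        sub_le_sub (by linarith) hβ2
      _ = ∑' y : (D i₁), (∏ t, pois (lam + u i₁ t) ((y : Fin n → ℕ) t)
            - ∏ t, pois (lam + u i₂ t) ((y : Fin n → ℕ) t)) := (Summable.tsum_sub hsub1 hsub2).symm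
      _ ≤ ∑' y : (D i₁), |∏ t, pois (lam + u i₁ t) ((y : Fin n → ℕ) t)
            - ∏ t, pois (lam + u i₂ t) ((y : Fin n → ℕ) t)| :=
        Summable.tsum_le_tsum (fun y => le_abs_self _) (hsub1.sub hsub2) (habs.subtype _)
      _ ≤ ∑' y : Fin n → ℕ,
            |∏ t, pois (lam + u i₁ t) (y t) - ∏ t, pois (lam + u i₂ t) (y t)| :=
        Summable.tsum_subtype_le _ _ (fun y => abs_nonneg _) habs
      _ ≤ ∑ _t : Fin n, 2 * Real.exp (lam + Pmax) *
            ((lam + Pmax) * (Pmax / (n:ℝ) ^ ((1:ℝ) + b))) := hbig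
      _ = Kc / (n:ℝ) ^ (b:ℝ) := hsumconst
      _ < 4 * κ := hkey
  exact lt_irrefl _ hcontr
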